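/- Under the conditional independence of censoring given Z, positivity of G_c, and integrability, the weighted log-likelihood satisfies E[ (Δ₁Δ₂ / G_c(T₁, T₂; Z)) · log L(θ; X, T, ε) ] = E[ log L(θ; X, T, ε) ] for every parameter θ. -/

import Mathlib

/-!
Conditioning on the full-data σ-algebra `m`, the weighted integrand `(L / G) · Δ₁Δ₂` has the same
integral as `(L / G) · E[Δ₁Δ₂ | m] = L`, because `L / G` is `m`-measurable. The delicate point is
integrability of the weighted integrand, as `1 / G` may be unbounded: the measures with densities
`Δ₁Δ₂` and `E[Δ₁Δ₂ | m]` agree on `m`, so `∫⁻ |L / G| Δ₁Δ₂ = ∫⁻ |L / G| E[Δ₁Δ₂ | m] = ∫⁻ |L|`.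
-/

open MeasureTheory ProbabilityTheory

namespace MeasureTheory

variable {Ω : Type*} {m m₀ : MeasurableSpace Ω} {μ : Measure Ω}

/- `μ[f | m]` is the junk value `0` unless `m ≤ m₀` and `f` is integrable. -/

theorem le_of_ae_condExp_ne_zero [NeZero μ] {f : Ω → ℝ}
    (hf : ∀ᵐ ω ∂μ, μ[f | m] ω ≠ 0) : m ≤ m₀ := by
  by_contra hm
  rw [condExp_of_not_le hm] at hf
  simpa using hf.exists

theorem integrable_of_ae_condExp_ne_zero [NeZero μ] {f : Ω → ℝ}
    (hf : ∀ᵐ ω ∂μ, μ[f | m] ω ≠ 0) : Integrable f μ := by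
  by_contra hint
  rw [condExp_of_not_integrable hint] at hf
  simpa using hf.exists

theorem setLIntegral_ofReal_condExp (hm : m ≤ m₀) [SigmaFinite (μ.trim hm)] {W : Ω → ℝ}
    (hW : Integrable W μ) (hW0 : 0 ≤ᵐ[μ] W) {s : Set Ω} (hs : MeasurableSet[m] s) :
    ∫⁻ ω in s, ENNReal.ofReal (μ[W | m] ω) ∂μ = ∫⁻ ω in s, ENNReal.ofReal (W ω) ∂μ := by
  rw [← ofReal_integral_eq_lintegral_ofReal integrable_condExp.restrict
      (ae_restrict_of_ae (condExp_nonneg hW0)),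
    ← ofReal_integral_eq_lintegral_ofReal hW.restrict (ae_restrict_of_ae hW0),
    setIntegral_condExp hm hW hs]

theorem lintegral_ofReal_condExp_mul (hm : m ≤ m₀) [SigmaFinite (μ.trim hm)] {W : Ω → ℝ}
    (hW : Integrable W μ) (hW0 : 0 ≤ᵐ[μ] W) {g : Ω → ENNReal} (hg : Measurable[m] g) :
    ∫⁻ ω, ENNReal.ofReal (μ[W | m] ω) * g ω ∂μ = ∫⁻ ω, ENNReal.ofReal (W ω) * g ω ∂μ := by
  have hg₀ : Measurable g := hg.mono hm le_rfl
  have htrim : (μ.withDensity fun ω => ENNReal.ofReal (μ[W | m] ω)).trim hm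
      = (μ.withDensity fun ω => ENNReal.ofReal (W ω)).trim hm := by
    refine @Measure.ext _ m _ _ fun s hs => ?_
    rw [trim_measurableSet_eq hm hs, trim_measurableSet_eq hm hs,
      withDensity_apply _ (hm s hs), withDensity_apply _ (hm s hs),
      setLIntegral_ofReal_condExp hm hW hW0 hs]
  calc ∫⁻ ω, ENNReal.ofReal (μ[W | m] ω) * g ω ∂μ
      = ∫⁻ ω, g ω ∂(μ.withDensity fun ω => ENNReal.ofReal (μ[W | m] ω)).trim hm := by
        rw [lintegral_trim hm hg, lintegral_withDensity_eq_lintegral_mul₀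
          (stronglyMeasurable_condExp.mono hm).measurable.ennreal_ofReal.aemeasurable
          hg₀.aemeasurable]
        rfl
    _ = ∫⁻ ω, ENNReal.ofReal (W ω) * g ω ∂μ := by
        rw [htrim, lintegral_trim hm hg, lintegral_withDensity_eq_lintegral_mul₀
          hW.1.aemeasurable.ennreal_ofReal hg₀.aemeasurable]
        rfl

theorem integrable_mul_of_integrable_mul_condExp (hm : m ≤ m₀) [SigmaFinite (μ.trim hm)]
    {h W : Ω → ℝ} (hh : StronglyMeasurable[m] h) (hW : Integrable W μ) (hW0 : 0 ≤ᵐ[μ] W)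
    (hint : Integrable (h * μ[W | m]) μ) : Integrable (h * W) μ := by
  refine ⟨(hh.mono hm).aestronglyMeasurable.mul hW.1, ?_⟩
  have hh_enorm : Measurable[m] fun ω => ‖h ω‖ₑ := measurable_enorm.comp hh.measurable
  have hlint : ∫⁻ ω, ‖(h * W) ω‖ₑ ∂μ = ∫⁻ ω, ‖(h * μ[W | m]) ω‖ₑ ∂μ := by
    calc ∫⁻ ω, ‖(h * W) ω‖ₑ ∂μ = ∫⁻ ω, ENNReal.ofReal (W ω) * ‖h ω‖ₑ ∂μ := by
          refine lintegral_congr_ae ?_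
          filter_upwards [hW0] with ω hω
          rw [Pi.mul_apply, enorm_mul, Real.enorm_of_nonneg hω, mul_comm]
      _ = ∫⁻ ω, ENNReal.ofReal (μ[W | m] ω) * ‖h ω‖ₑ ∂μ :=
          (lintegral_ofReal_condExp_mul hm hW hW0 hh_enorm).symm
      _ = ∫⁻ ω, ‖(h * μ[W | m]) ω‖ₑ ∂μ := by
          refine lintegral_congr_ae ?_
          filter_upwards [condExp_nonneg (m := m) hW0] with ω hω
          rw [Pi.mul_apply, enorm_mul, Real.enorm_of_nonneg hω, mul_comm]
  rw [HasFiniteIntegral, hlint]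
  exact hint.2

theorem integral_mul_eq_integral_mul_condExp (hm : m ≤ m₀) [SigmaFinite (μ.trim hm)]
    {h W : Ω → ℝ} (hh : StronglyMeasurable[m] h) (hW : Integrable W μ) (hW0 : 0 ≤ᵐ[μ] W)
    (hint : Integrable (h * μ[W | m]) μ) : ∫ ω, (h * W) ω ∂μ = ∫ ω, (h * μ[W | m]) ω ∂μ := by
  rw [← integral_condExp hm]
  exact integral_congr_ae (condExp_mul_of_stronglyMeasurable_left hh
    (integrable_mul_of_integrable_mul_condExp hm hh hW hW0 hint) hW)

end MeasureTheory

theorem stmt7_general {Ω 𝒳 𝒵 Θ : Type*} [MeasureSpace Ω] [IsProbabilityMeasure (ℙ : Measure Ω)]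
    [MeasurableSpace 𝒳] [MeasurableSpace 𝒵]
    (T₁ T₂ C₁ C₂ : Ω → ℝ) (ε₁ ε₂ : Ω → ℕ) (X : Ω → 𝒳) (Z : Ω → 𝒵)
    (Gc : ℝ → ℝ → 𝒵 → ℝ) (logL : Θ → 𝒳 → ℝ → ℝ → ℕ → ℕ → ℝ)
    (m : MeasurableSpace Ω)
    (hcond : ℙ[fun ω => (if T₁ ω ≤ C₁ ω then (1:ℝ) else 0) *
                (if T₂ ω ≤ C₂ ω then (1:ℝ) else 0) | m]
        =ᵐ[ℙ] fun ω => Gc (T₁ ω) (T₂ ω) (Z ω))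
    (hpos : ∀ᵐ ω ∂ℙ, 0 < Gc (T₁ ω) (T₂ ω) (Z ω))
    (hGmeas : Measurable[m] fun ω => Gc (T₁ ω) (T₂ ω) (Z ω))
    (hLmeas : ∀ θ, Measurable[m] fun ω => logL θ (X ω) (T₁ ω) (T₂ ω) (ε₁ ω) (ε₂ ω))
    (hLbdd : ∀ θ, ∃ M : ℝ, ∀ ω, |logL θ (X ω) (T₁ ω) (T₂ ω) (ε₁ ω) (ε₂ ω)| ≤ M) :
    ∀ θ : Θ,
      ∫ ω, ((if T₁ ω ≤ C₁ ω then (1:ℝ) else 0) * (if T₂ ω ≤ C₂ ω then (1:ℝ) else 0)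
          / Gc (T₁ ω) (T₂ ω) (Z ω)) * logL θ (X ω) (T₁ ω) (T₂ ω) (ε₁ ω) (ε₂ ω) ∂ℙ
        = ∫ ω, logL θ (X ω) (T₁ ω) (T₂ ω) (ε₁ ω) (ε₂ ω) ∂ℙ := by
  intro θ
  set W : Ω → ℝ := fun ω => (if T₁ ω ≤ C₁ ω then (1:ℝ) else 0) *
    (if T₂ ω ≤ C₂ ω then (1:ℝ) else 0)
  set G : Ω → ℝ := fun ω => Gc (T₁ ω) (T₂ ω) (Z ω)
  set L : Ω → ℝ := fun ω => logL θ (X ω) (T₁ ω) (T₂ ω) (ε₁ ω) (ε₂ ω)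
  obtain ⟨M, hM⟩ := hLbdd θ
  have hW0 : 0 ≤ᵐ[ℙ] W := .of_forall fun ω => by positivity
  have hcond_ne : ∀ᵐ ω ∂ℙ, condExp m ℙ W ω ≠ 0 := by
    filter_upwards [hcond, hpos] with ω hω hGω
    exact hω ▸ hGω.ne'
  have hm := le_of_ae_condExp_ne_zero hcond_ne
  have hWint := integrable_of_ae_condExp_ne_zero hcond_ne
  have hLint : Integrable L ℙ :=
    .of_bound ((hLmeas θ).mono hm le_rfl).aestronglyMeasurable M (.of_forall hM)
  have hweight : (L / G) * condExp m ℙ W =ᵐ[ℙ] L := by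
    filter_upwards [hcond, hpos] with ω hω hGω
    rw [Pi.mul_apply, hω, Pi.div_apply, div_mul_cancel₀ _ hGω.ne']
  calc ∫ ω, W ω / G ω * L ω ∂ℙ = ∫ ω, (L / G * W) ω ∂ℙ := by
        congr 1; ext ω; simp only [Pi.mul_apply, Pi.div_apply]; ring
    _ = ∫ ω, (L / G * condExp m ℙ W) ω ∂ℙ :=
        integral_mul_eq_integral_mul_condExp hm ((hLmeas θ).div hGmeas).stronglyMeasurable
          hWint hW0 (hLint.congr hweight.symm)
    _ = ∫ ω, L ω ∂ℙ := integral_congr_ae hweight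

/-- The IPCW-weighted log-likelihood is unbiased for the complete-data
log-likelihood: under conditional independence of censoring given `Z`
(expressed via `E[Δ₁Δ₂ | full data] = G_c(T₁,T₂;Z)` a.s.), positivity of `G_c`
and boundedness of the log-likelihood, for every parameter `θ`,
`E[(Δ₁Δ₂ / G_c(T₁,T₂;Z)) · log L(θ; X,T,ε)] = E[log L(θ; X,T,ε)]`. -/
theorem stmt7 {Ω 𝒳 𝒵 Θ : Type*} [MeasureSpace Ω] [IsProbabilityMeasure (ℙ : Measure Ω)]
    [MeasurableSpace 𝒳] [MeasurableSpace 𝒵]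
    (T₁ T₂ C₁ C₂ : Ω → ℝ) (ε₁ ε₂ : Ω → ℕ) (X : Ω → 𝒳) (Z : Ω → 𝒵)
    (Gc : ℝ → ℝ → 𝒵 → ℝ) (logL : Θ → 𝒳 → ℝ → ℝ → ℕ → ℕ → ℝ)
    (m : MeasurableSpace Ω) (hm : m ≤ (inferInstance : MeasurableSpace Ω))
    (hmdef : m = MeasurableSpace.comap
      (fun ω => (X ω, T₁ ω, T₂ ω, ε₁ ω, ε₂ ω, Z ω)) inferInstance)
    (hcond : ℙ[fun ω => (if T₁ ω ≤ C₁ ω then (1:ℝ) else 0) *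
                (if T₂ ω ≤ C₂ ω then (1:ℝ) else 0) | m]
        =ᵐ[ℙ] fun ω => Gc (T₁ ω) (T₂ ω) (Z ω))
    (hpos : ∀ᵐ ω ∂ℙ, 0 < Gc (T₁ ω) (T₂ ω) (Z ω))
    (hGmeas : Measurable[m] fun ω => Gc (T₁ ω) (T₂ ω) (Z ω))
    (hLmeas : ∀ θ, Measurable[m] fun ω => logL θ (X ω) (T₁ ω) (T₂ ω) (ε₁ ω) (ε₂ ω))
    (hLbdd : ∀ θ, ∃ M : ℝ, ∀ ω, |logL θ (X ω) (T₁ ω) (T₂ ω) (ε₁ ω) (ε₂ ω)| ≤ M) :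
    ∀ θ : Θ,
      ∫ ω, ((if T₁ ω ≤ C₁ ω then (1:ℝ) else 0) * (if T₂ ω ≤ C₂ ω then (1:ℝ) else 0)
          / Gc (T₁ ω) (T₂ ω) (Z ω)) * logL θ (X ω) (T₁ ω) (T₂ ω) (ε₁ ω) (ε₂ ω) ∂ℙ
        = ∫ ω, logL θ (X ω) (T₁ ω) (T₂ ω) (ε₁ ω) (ε₂ ω) ∂ℙ :=
  stmt7_general T₁ T₂ C₁ C₂ ε₁ ε₂ X Z Gc logL m hcond hpos hGmeas hLmeas hLbdd
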